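/- arXiv:1809.03190 — 2 statements merged into one kernel-verified Lean document; each statement's English description precedes it below -/
import Mathlib

section
/- If N₁ and N₂ are norms on ℝⁿ and N = N₁ + N₂, then the dual unit ball of N equals the Minkowski sum of the dual unit balls of N₁ and N₂. -/
open Pointwise

/-! A functional `φ ≤ p + q`, read as `(x, x) ↦ φ x` on the diagonal of `E × E`, lies below the
sublinear function `(x, y) ↦ p x + q y`. Hahn–Banach extends it to a functional `g` on `E × E`
below that function, and `φ = g(·, 0) + g(0, ·)` is the required splitting. -/

section SublinearSplitting

variable {E : Type*} [AddCommGroup E] [Module ℝ E] {p q : E → ℝ}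

theorem map_zero_of_pos_homogeneous (hp : ∀ c : ℝ, 0 < c → ∀ x, p (c • x) = c * p x) : p 0 = 0 := by
  have h := hp 2 two_pos 0
  rw [smul_zero] at h
  linarith

theorem LinearMap.exists_add_eq_of_le_add_of_sublinear (φ : E →ₗ[ℝ] ℝ)
    (hp_hom : ∀ c : ℝ, 0 < c → ∀ x, p (c • x) = c * p x) (hp_add : ∀ x y, p (x + y) ≤ p x + p y)
    (hq_hom : ∀ c : ℝ, 0 < c → ∀ x, q (c • x) = c * q x) (hq_add : ∀ x y, q (x + y) ≤ q x + q y)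
    (hφ : ∀ x, φ x ≤ p x + q x) :
    ∃ φ₁ φ₂ : E →ₗ[ℝ] ℝ, (∀ x, φ₁ x ≤ p x) ∧ (∀ x, φ₂ x ≤ q x) ∧ φ₁ + φ₂ = φ := by
  let diagonal := LinearMap.range (LinearMap.id.prod LinearMap.id : E →ₗ[ℝ] E × E)
  obtain ⟨g, hg_ext, hg_le⟩ := exists_extension_of_le_sublinear
    ((φ.comp (LinearMap.fst ℝ E E)).toPMap diagonal) (fun z => p z.1 + q z.2)
    (fun c hc z => by simp only [Prod.smul_fst, Prod.smul_snd, hp_hom c hc, hq_hom c hc]; ring)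
    (fun z w => by simp only [Prod.fst_add, Prod.snd_add]; linarith [hp_add z.1 w.1, hq_add z.2 w.2])
    (by rintro ⟨_, x, rfl⟩; exact hφ x)
  refine ⟨g.comp (LinearMap.inl ℝ E E), g.comp (LinearMap.inr ℝ E E),
    fun x => by simpa [map_zero_of_pos_homogeneous hq_hom] using hg_le (x, 0),
    fun y => by simpa [map_zero_of_pos_homogeneous hp_hom] using hg_le (0, y), ?_⟩
  ext x
  simpa [← map_add] using hg_ext ⟨(x, x), x, rfl⟩

theorem setOf_le_add_eq_add_of_sublinear
    (hp_hom : ∀ c : ℝ, 0 < c → ∀ x, p (c • x) = c * p x) (hp_add : ∀ x y, p (x + y) ≤ p x + p y)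
    (hq_hom : ∀ c : ℝ, 0 < c → ∀ x, q (c • x) = c * q x) (hq_add : ∀ x y, q (x + y) ≤ q x + q y) :
    {φ : E →ₗ[ℝ] ℝ | ∀ x, φ x ≤ p x + q x} =
      {φ : E →ₗ[ℝ] ℝ | ∀ x, φ x ≤ p x} + {φ : E →ₗ[ℝ] ℝ | ∀ x, φ x ≤ q x} := by
  ext φ
  constructor
  · intro hφ
    obtain ⟨φ₁, φ₂, hφ₁, hφ₂, rfl⟩ :=
      φ.exists_add_eq_of_le_add_of_sublinear hp_hom hp_add hq_hom hq_add hφ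
    exact Set.add_mem_add hφ₁ hφ₂
  · rintro ⟨φ₁, hφ₁, φ₂, hφ₂, rfl⟩ x
    exact add_le_add (hφ₁ x) (hφ₂ x)

end SublinearSplitting

theorem dual_ball_of_sum_eq_minkowski_sum_general (n : ℕ)
    (N₁ N₂ : (Fin n → ℝ) → ℝ)
    (h₁hom : ∀ (t : ℝ) x, N₁ (t • x) = |t| * N₁ x)
    (h₁add : ∀ x y, N₁ (x + y) ≤ N₁ x + N₁ y)
    (h₂hom : ∀ (t : ℝ) x, N₂ (t • x) = |t| * N₂ x)
    (h₂add : ∀ x y, N₂ (x + y) ≤ N₂ x + N₂ y) :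
    {φ : (Fin n → ℝ) →ₗ[ℝ] ℝ | ∀ x, φ x ≤ N₁ x + N₂ x} =
      {φ : (Fin n → ℝ) →ₗ[ℝ] ℝ | ∀ x, φ x ≤ N₁ x} +
        {φ : (Fin n → ℝ) →ₗ[ℝ] ℝ | ∀ x, φ x ≤ N₂ x} :=
  setOf_le_add_eq_add_of_sublinear
    (fun c hc x => by rw [h₁hom, abs_of_pos hc]) h₁add
    (fun c hc x => by rw [h₂hom, abs_of_pos hc]) h₂add

/-- The dual unit ball of a sum of two norms is the Minkowski sum of the two
dual unit balls. -/
theorem dual_ball_of_sum_eq_minkowski_sum (n : ℕ)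
    (N₁ N₂ : (Fin n → ℝ) → ℝ)
    (h₁ : ∀ x, 0 ≤ N₁ x) (h₁hom : ∀ (t : ℝ) x, N₁ (t • x) = |t| * N₁ x)
    (h₁add : ∀ x y, N₁ (x + y) ≤ N₁ x + N₁ y) (h₁def : ∀ x, N₁ x = 0 → x = 0)
    (h₂ : ∀ x, 0 ≤ N₂ x) (h₂hom : ∀ (t : ℝ) x, N₂ (t • x) = |t| * N₂ x)
    (h₂add : ∀ x y, N₂ (x + y) ≤ N₂ x + N₂ y) (h₂def : ∀ x, N₂ x = 0 → x = 0) :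
    {φ : (Fin n → ℝ) →ₗ[ℝ] ℝ | ∀ x, φ x ≤ N₁ x + N₂ x} =
      {φ : (Fin n → ℝ) →ₗ[ℝ] ℝ | ∀ x, φ x ≤ N₁ x} +
        {φ : (Fin n → ℝ) →ₗ[ℝ] ℝ | ∀ x, φ x ≤ N₂ x} :=
  dual_ball_of_sum_eq_minkowski_sum_general n N₁ N₂ h₁hom h₁add h₂hom h₂add
end

section
/- The convex hull P of the eight vectors ±(1,1,1,1), ±(1,-1,1,1), ±(-1,1,1,1), ±(1,1,-1,1) in ℝ⁴ has nonempty interior, is centrally symmetric, is contained in [-1,1]⁴, and all its vertices are congruent to each other modulo 2 (coordinatewise). -/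
/-- The convex hull of `±(1,1,1,1), ±(1,-1,1,1), ±(-1,1,1,1), ±(1,1,-1,1)`
has nonempty interior, is centrally symmetric, lies in `[-1,1]⁴`, and all its
generating vertices are pairwise congruent mod 2. -/
theorem P8_example_properties :
    let S : Set (Fin 4 → ℝ) :=
      {![1,1,1,1], ![1,-1,1,1], ![-1,1,1,1], ![1,1,-1,1],
       -![1,1,1,1], -![1,-1,1,1], -![-1,1,1,1], -![1,1,-1,1]}
    let P := convexHull ℝ S
    (interior P).Nonempty ∧
    P = -P ∧
    (∀ x ∈ P, ∀ i, |x i| ≤ 1) ∧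
    (∀ u ∈ S, ∀ v ∈ S, ∀ i, ∃ k : ℤ, u i - v i = 2 * k) := by
  intro S P
  have hv1 : (![1,1,1,1] : Fin 4 → ℝ) ∈ S := by simp [S]
  have hv2 : (![1,-1,1,1] : Fin 4 → ℝ) ∈ S := by simp [S]
  have hv3 : (![(-1:ℝ),1,1,1] : Fin 4 → ℝ) ∈ S := by simp [S]
  have hv4 : (![1,1,-1,1] : Fin 4 → ℝ) ∈ S := by simp [S]
  have hv5 : (-![1,1,1,1] : Fin 4 → ℝ) ∈ S := by simp [S]
  refine ⟨?_, ?_, ?_, ?_⟩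
  · -- nonempty interior
    rw [interior_convexHull_nonempty_iff_affineSpan_eq_top]
    rw [AffineSubspace.affineSpan_eq_top_iff_vectorSpan_eq_top_of_nonempty ℝ (Fin 4 → ℝ)
      (Fin 4 → ℝ) ⟨_, hv1⟩]
    rw [eq_top_iff, ← (Pi.basisFun ℝ (Fin 4)).span_eq, Submodule.span_le]
    rintro x ⟨i, rfl⟩
    have h0 : (![1,1,1,1] : Fin 4 → ℝ) - ![-1,1,1,1] ∈ vectorSpan ℝ S :=
      vsub_mem_vectorSpan ℝ hv1 hv3
    have h1 : (![1,1,1,1] : Fin 4 → ℝ) - ![1,-1,1,1] ∈ vectorSpan ℝ S :=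
      vsub_mem_vectorSpan ℝ hv1 hv2
    have h2 : (![1,1,1,1] : Fin 4 → ℝ) - ![1,1,-1,1] ∈ vectorSpan ℝ S :=
      vsub_mem_vectorSpan ℝ hv1 hv4
    have h3 : (![1,1,1,1] : Fin 4 → ℝ) - (-![1,1,1,1]) ∈ vectorSpan ℝ S :=
      vsub_mem_vectorSpan ℝ hv1 hv5
    have key : ∀ j : Fin 4, Pi.basisFun ℝ (Fin 4) j ∈ vectorSpan ℝ S := by
      intro j
      fin_cases j
      · have := Submodule.smul_mem _ ((2:ℝ)⁻¹) h0
        convert this using 1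
        ext k; fin_cases k <;> norm_num [Pi.basisFun_apply, Pi.single_apply, Fin.ext_iff]
      · have := Submodule.smul_mem _ ((2:ℝ)⁻¹) h1
        convert this using 1
        ext k; fin_cases k <;> norm_num [Pi.basisFun_apply, Pi.single_apply, Fin.ext_iff]
      · have := Submodule.smul_mem _ ((2:ℝ)⁻¹) h2
        convert this using 1
        ext k; fin_cases k <;> norm_num [Pi.basisFun_apply, Pi.single_apply, Fin.ext_iff]
      · have := Submodule.sub_mem _ (Submodule.smul_mem _ ((2:ℝ)⁻¹) h3)
          (Submodule.add_mem _ (Submodule.add_mem _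
            (Submodule.smul_mem _ ((2:ℝ)⁻¹) h0) (Submodule.smul_mem _ ((2:ℝ)⁻¹) h1))
            (Submodule.smul_mem _ ((2:ℝ)⁻¹) h2))
        convert this using 1
        ext k; fin_cases k <;> norm_num [Pi.basisFun_apply, Pi.single_apply, Fin.ext_iff]
    exact key i
  · -- central symmetry
    have hS : S = -S := by
      ext x
      simp only [S, Set.mem_neg, Set.mem_insert_iff, Set.mem_singleton_iff,
        neg_eq_iff_eq_neg, neg_neg]
      tauto
    show convexHull ℝ S = -convexHull ℝ S
    conv_lhs => rw [hS]
    exact convexHull_neg S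
  · -- bound
    intro x hx i
    have hC : Convex ℝ {y : Fin 4 → ℝ | ∀ j, |y j| ≤ 1} := by
      intro a ha b hb s t hs ht hst j
      calc |s * a j + t * b j| ≤ |s * a j| + |t * b j| := abs_add_le _ _
        _ = s * |a j| + t * |b j| := by rw [abs_mul, abs_mul, abs_of_nonneg hs, abs_of_nonneg ht]
        _ ≤ s * 1 + t * 1 := by
            gcongr
            exacts [ha j, hb j]
        _ = 1 := by linarith
    have hSC : S ⊆ {y : Fin 4 → ℝ | ∀ j, |y j| ≤ 1} := by
      intro y hy j
      rcases hy with rfl|rfl|rfl|rfl|rfl|rfl|rfl|rfl <;> fin_cases j <;>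
        norm_num
    exact convexHull_min hSC hC hx i
  · -- mod 2
    have odd : ∀ u ∈ S, ∀ i, ∃ m : ℤ, u i = 2 * m + 1 := by
      intro u hu i
      rcases hu with rfl|rfl|rfl|rfl|rfl|rfl|rfl|rfl <;> fin_cases i <;>
        first
        | (refine ⟨0, ?_⟩; norm_num; done)
        | (refine ⟨-1, ?_⟩; norm_num; done)
    intro u hu v hv i
    obtain ⟨m, hm⟩ := odd u hu i
    obtain ⟨n, hn⟩ := odd v hv i
    exact ⟨m - n, by push_cast; linarith⟩
end
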